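/- The characteristic of the induced S_n-module Ind_{C_n}^{S_n} χ_n equals (1/n) Σ_{d|n} μ(d) p_d^{n/d}, where χ_n is the character of the cyclic group C_n sending a fixed generator to e^{2πi/n}. -/

import Mathlib

/-!  The Frobenius characteristic of the induced module `Ind_{Cₙ}^{Sₙ} χₙ`, where
`Cₙ ⊆ Sₙ` is the cyclic subgroup generated by the `n`-cycle `finRotate n` and `χₙ`
sends this generator to `e^{2πi/n}`.  We work in `Λ_ℂ`, the ring of symmetric
functions over `ℂ` (polynomial ring on the power sums), using the standard formulas:
the Frobenius characteristic of a character `χ` of `Sₙ` is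
`ch(χ) = (1/n!) Σ_{g ∈ Sₙ} χ(g) p_{cycletype(g)}` (equivalently
`Σ_{|λ|=n} χ(O_λ) p_λ / z(λ)`), and the induced character is
`χ*(g) = (1/|Cₙ|) Σ_{x ∈ Sₙ} χ̇(x⁻¹ g x)` with `χ̇` extending `χₙ` by zero. -/

noncomputable section

open Equiv Complex

/-- The ring of symmetric functions over `ℂ`, as the polynomial ring on `p₁, p₂, …`. -/
abbrev SymmFnC : Type := MvPolynomial ℕ+ ℂ

/-- The power sum symmetric functions. -/
def pC (k : ℕ) : SymmFnC :=
  if h : 0 < k then MvPolynomial.X (⟨k, h⟩ : ℕ+) else 1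

/-- `p_λ` for the cycle type `λ` of a permutation (including its fixed points). -/
def pOf {n : ℕ} (g : Equiv.Perm (Fin n)) : SymmFnC :=
  (g.cycleType.map pC).prod * pC 1 ^ (n - g.cycleType.sum)

/-- The character `χₙ` of `Cₙ = ⟨finRotate n⟩`, extended by zero to `Sₙ`:
`χ̇(cᵏ) = e^{2πik/n}`. -/
def chiDot (n : ℕ) (g : Equiv.Perm (Fin n)) : ℂ :=
  ∑ k ∈ Finset.range n,
    if g = (finRotate n) ^ k then Complex.exp (2 * (Real.pi : ℂ) * I * k / n) else 0

/-- The induced character `Ind_{Cₙ}^{Sₙ} χₙ`: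
`χ*(g) = (1/|Cₙ|) Σ_{x ∈ Sₙ} χ̇(x⁻¹ g x)`. -/
def chiInd (n : ℕ) (g : Equiv.Perm (Fin n)) : ℂ :=
  ((n : ℂ))⁻¹ * ∑ x : Equiv.Perm (Fin n), chiDot n (x⁻¹ * g * x)

/-- The Frobenius characteristic `ch(χ) = (1/n!) Σ_{g ∈ Sₙ} χ(g) p_{cycletype(g)}`. -/
def chFrob (n : ℕ) (chi : Equiv.Perm (Fin n) → ℂ) : SymmFnC :=
  ((n.factorial : ℂ))⁻¹ • ∑ g : Equiv.Perm (Fin n), chi g • pOf g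

/-! Because `pOf` is a class function, averaging `χ̇` over conjugates does not change
`Σ_g χ̇(g) pOf(g)`, so `ch(Ind χₙ) = (1/n) Σ_{k<n} e^{2πik/n} pOf(cᵏ)` for the `n`-cycle `c`.
The group `⟨cᵏ⟩` acts freely, so `cᵏ` has `n/d` cycles of length `d = n / gcd(n, k)`. Grouping the
`k` by `d` leaves the Ramanujan sums `Σ_{m<d, (m,d)=1} e^{2πim/d}`, which equal `μ(d)` by Möbius
inversion of `Σ_{k<n} e^{2πik/n} = [n = 1]`. -/

open Finset Real

theorem sum_sum_conj_smul_eq_card_smul {G R M : Type*} [Group G] [Fintype G] [Semiring R]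
    [AddCommMonoid M] [Module R M] (f : G → R) {p : G → M} (hp : ∀ x g, p (x * g * x⁻¹) = p g) :
    ∑ g, (∑ x, f (x⁻¹ * g * x)) • p g = Fintype.card G • ∑ g, f g • p g := by
  have hconj (x : G) : ∑ g, f (x⁻¹ * g * x) • p g = ∑ g, f g • p g :=
    Fintype.sum_equiv (MulAut.conj x⁻¹).toEquiv _ _ fun g => by simp [← hp x⁻¹ g]
  simp_rw [sum_smul]
  rw [sum_comm, sum_congr rfl fun x _ => hconj x, sum_const, card_univ]

namespace Equiv.Perm
variable {α : Type*} [Fintype α] [DecidableEq α]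

theorem exists_pow_apply_eq_self_of_mem_cycleType {σ : Perm α} {ℓ : ℕ} (h : ℓ ∈ σ.cycleType) :
    ∃ x, σ x ≠ x ∧ (σ ^ ℓ) x = x := by
  rw [cycleType_def, Multiset.mem_map] at h
  obtain ⟨c, hc, rfl⟩ := h
  obtain ⟨x, hx⟩ := (mem_cycleFactorsFinset_iff.mp hc).1.nonempty_support
  refine ⟨x, mem_support.mp (mem_cycleFactorsFinset_support_le hc hx), ?_⟩
  simpa [← cycle_is_cycleOf hx hc] using (pow_mod_card_support_cycleOf_self_apply σ
    #(σ.cycleOf x).support x).symm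

theorem eq_orderOf_of_mem_parts_partition {σ : Perm α}
    (hfree : ∀ (j : ℕ) (x : α), (σ ^ j) x = x → σ ^ j = 1) {ℓ : ℕ}
    (h : ℓ ∈ σ.partition.parts) : ℓ = orderOf σ := by
  rcases Multiset.mem_add.mp h with hcyc | hfix
  · obtain ⟨x, -, hx⟩ := exists_pow_apply_eq_self_of_mem_cycleType hcyc
    exact Nat.dvd_antisymm (dvd_of_mem_cycleType hcyc) (orderOf_dvd_of_pow_eq_one (hfree ℓ x hx))
  · obtain ⟨hpos, rfl⟩ := Multiset.mem_replicate.mp hfix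
    obtain ⟨x, hx⟩ : ∃ x, σ x = x := by
      by_contra! hmoved
      have : σ.support = univ := eq_univ_iff_forall.mpr fun x => mem_support.mpr (hmoved x)
      simp [this] at hpos
    exact (orderOf_eq_one_iff.mpr (by simpa using hfree 1 x hx)).symm

theorem parts_partition_eq_replicate {σ : Perm α}
    (hfree : ∀ (j : ℕ) (x : α), (σ ^ j) x = x → σ ^ j = 1) :
    σ.partition.parts = Multiset.replicate (Fintype.card α / orderOf σ) (orderOf σ) := by
  have hparts := Multiset.eq_replicate_card.mpr fun ℓ h => eq_orderOf_of_mem_parts_partition hfree h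
  have hsum := σ.partition.parts_sum
  rw [hparts, Multiset.sum_replicate, smul_eq_mul] at hsum
  rw [hparts, Nat.div_eq_of_eq_mul_left (orderOf_pos σ) hsum.symm]

end Equiv.Perm

section finRotate
open Fin.CommRing
variable {n : ℕ} [NeZero n]

theorem finRotate_pow_apply (j : ℕ) (x : Fin n) : (finRotate n ^ j) x = x + j := by
  induction j generalizing x with
  | zero => simp
  | succ j ih =>
    rw [pow_succ', Perm.mul_apply, ih, finRotate_apply, Nat.cast_succ, add_assoc]

theorem finRotate_pow_apply_eq_self_iff {j : ℕ} {x : Fin n} :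
    (finRotate n ^ j) x = x ↔ n ∣ j := by
  rw [finRotate_pow_apply, add_eq_left, Fin.natCast_eq_zero]

theorem finRotate_pow_eq_one_iff {j : ℕ} : finRotate n ^ j = 1 ↔ n ∣ j := by
  rw [← finRotate_pow_apply_eq_self_iff (x := 0)]
  exact ⟨fun h => by rw [h, Perm.one_apply], fun h => Perm.ext fun x =>
    finRotate_pow_apply_eq_self_iff.mpr (finRotate_pow_apply_eq_self_iff.mp h)⟩

theorem orderOf_finRotate : orderOf (finRotate n) = n :=
  Nat.dvd_antisymm (orderOf_dvd_of_pow_eq_one (finRotate_pow_eq_one_iff.mpr dvd_rfl))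
    (finRotate_pow_eq_one_iff.mp (pow_orderOf_eq_one _))

theorem finRotate_pow_pow_eq_one_of_apply_eq_self (k j : ℕ) (x : Fin n)
    (h : ((finRotate n ^ k) ^ j) x = x) : (finRotate n ^ k) ^ j = 1 := by
  rw [← pow_mul] at h ⊢
  exact finRotate_pow_eq_one_iff.mpr (finRotate_pow_apply_eq_self_iff.mp h)

end finRotate

theorem pOf_eq_prod_parts_partition {n : ℕ} (g : Perm (Fin n)) :
    pOf g = (g.partition.parts.map pC).prod := by
  rw [pOf, Perm.parts_partition, Multiset.map_add, Multiset.prod_add, Multiset.map_replicate,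
    Multiset.prod_replicate, Perm.sum_cycleType, Fintype.card_fin]

theorem pOf_conj {n : ℕ} (x g : Perm (Fin n)) : pOf (x * g * x⁻¹) = pOf g := by
  rw [pOf, pOf, Perm.cycleType_conj]

theorem pOf_finRotate_pow {n : ℕ} [NeZero n] (k : ℕ) :
    pOf (finRotate n ^ k) = pC (n / n.gcd k) ^ (n / (n / n.gcd k)) := by
  rw [pOf_eq_prod_parts_partition,
    Perm.parts_partition_eq_replicate (finRotate_pow_pow_eq_one_of_apply_eq_self k),
    orderOf_pow, orderOf_finRotate, Multiset.map_replicate, Multiset.prod_replicate,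
    Fintype.card_fin]

theorem Nat.sum_range_eq_sum_divisors_sum_coprime {M : Type*} [AddCommMonoid M] {n : ℕ}
    (hn : 0 < n) (F : ℕ → ℕ → M) :
    ∑ k ∈ range n, F (n / n.gcd k) (k / n.gcd k)
      = ∑ d ∈ n.divisors, ∑ m ∈ (range d).filter d.Coprime, F d m := by
  rw [sum_sigma']
  refine sum_nbij' (fun k => ⟨n / n.gcd k, k / n.gcd k⟩) (fun p => n / p.1 * p.2)
    ?_ ?_ ?_ ?_ fun _ _ => rfl
  · intro k hk
    simp only [mem_sigma, mem_filter, Nat.mem_divisors, mem_range] at hk ⊢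
    exact ⟨⟨Nat.div_dvd_of_dvd (Nat.gcd_dvd_left n k), hn.ne'⟩,
      Nat.div_lt_div_of_lt_of_dvd (Nat.gcd_dvd_left n k) hk,
      Nat.coprime_div_gcd_div_gcd (Nat.gcd_pos_of_pos_left k hn)⟩
  · rintro ⟨d, m⟩ hp
    simp only [mem_sigma, mem_filter, Nat.mem_divisors, mem_range] at hp ⊢
    obtain ⟨⟨hdn, -⟩, hm, -⟩ := hp
    calc n / d * m < n / d * d :=
          Nat.mul_lt_mul_of_pos_left hm (Nat.div_pos (Nat.le_of_dvd hn hdn) (by omega))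
      _ = n := Nat.div_mul_cancel hdn
  · intro k _
    simp only [Nat.div_div_self (Nat.gcd_dvd_left n k) hn.ne',
      Nat.mul_div_cancel' (Nat.gcd_dvd_right n k)]
  · rintro ⟨d, m⟩ hp
    simp only [mem_sigma, mem_filter, Nat.mem_divisors, mem_range] at hp
    obtain ⟨⟨hdn, -⟩, -, hco⟩ := hp
    have hgcd : n.gcd (n / d * m) = n / d := by
      nth_rw 1 [← Nat.div_mul_cancel hdn]
      rw [Nat.gcd_mul_left, hco, mul_one]
    rw [hgcd, Nat.div_div_self hdn hn.ne',
      Nat.mul_div_cancel_left m (Nat.div_pos (Nat.le_of_dvd hn hdn) (Nat.pos_of_dvd_of_pos hdn hn))]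

theorem natCast_div_gcd_div_natCast_div_gcd {K : Type*} [DivisionRing K] [CharZero K] (n k : ℕ) :
    ((k / n.gcd k : ℕ) : K) / ((n / n.gcd k : ℕ) : K) = k / n := by
  obtain hg | hg := eq_or_ne (n.gcd k) 0
  · simp [Nat.gcd_eq_zero_iff.mp hg]
  · have hg' : (n.gcd k : K) ≠ 0 := Nat.cast_ne_zero.mpr hg
    rw [Nat.cast_div (Nat.gcd_dvd_right n k) hg', Nat.cast_div (Nat.gcd_dvd_left n k) hg',
      div_div_div_cancel_right₀ hg']

theorem sum_range_exp_two_pi_I_mul_div {n : ℕ} (hn : 0 < n) :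
    ∑ k ∈ range n, exp (2 * (π : ℂ) * I * k / n) = if n = 1 then 1 else 0 := by
  have hζ := Complex.isPrimitiveRoot_exp n hn.ne'
  have hpow (k : ℕ) : exp (2 * (π : ℂ) * I * k / n) = exp (2 * (π : ℂ) * I / n) ^ k := by
    rw [← Complex.exp_nat_mul]
    ring_nf
  simp_rw [hpow]
  split_ifs with h1
  · subst h1
    simp
  · exact hζ.geom_sum_eq_zero (by omega)

theorem sum_coprime_exp_two_pi_I_mul_div {d : ℕ} (hd : 0 < d) :
    ∑ m ∈ (range d).filter d.Coprime, exp (2 * (π : ℂ) * I * m / d)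
      = ArithmeticFunction.moebius d := by
  let ramanujan (e : ℕ) : ℂ := ∑ m ∈ (range e).filter e.Coprime, exp (2 * (π : ℂ) * I * m / e)
  have hsum_ramanujan : ∀ n > 0, ∑ e ∈ n.divisors, ramanujan e = if n = 1 then 1 else 0 := by
    intro n hn
    rw [← sum_range_exp_two_pi_I_mul_div hn, ← Nat.sum_range_eq_sum_divisors_sum_coprime hn
      fun e m => exp (2 * (π : ℂ) * I * m / e)]
    refine sum_congr rfl fun k _ => ?_
    simp only [mul_div_assoc, natCast_div_gcd_div_natCast_div_gcd]
  have hsum_moebius : ∀ n > 0, ∑ e ∈ n.divisors, (ArithmeticFunction.moebius e : ℂ)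
      = if n = 1 then 1 else 0 := by
    intro n _
    simpa only [ArithmeticFunction.coe_mul_zeta_apply, ArithmeticFunction.one_apply,
      ArithmeticFunction.intCoe_apply] using
      congrArg (· n) (ArithmeticFunction.coe_moebius_mul_coe_zeta (R := ℂ))
  -- Möbius inversion recovers a function from its divisor sums, and both have the same ones.
  exact ((ArithmeticFunction.sum_eq_iff_sum_smul_moebius_eq.mp hsum_ramanujan d hd).symm.trans
    (ArithmeticFunction.sum_eq_iff_sum_smul_moebius_eq.mp hsum_moebius d hd))

theorem sum_range_exp_smul_eq_sum_divisors_moebius_smul {M : Type*} [AddCommMonoid M]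
    [Module ℂ M] {n : ℕ} (hn : 0 < n) (F : ℕ → M) :
    ∑ k ∈ range n, exp (2 * (π : ℂ) * I * k / n) • F (n / n.gcd k)
      = ∑ d ∈ n.divisors, (ArithmeticFunction.moebius d : ℂ) • F d := by
  have hreindex := Nat.sum_range_eq_sum_divisors_sum_coprime hn
    fun d m => exp (2 * (π : ℂ) * I * m / d) • F d
  simp only [mul_div_assoc, natCast_div_gcd_div_natCast_div_gcd] at hreindex ⊢
  rw [hreindex]
  refine sum_congr rfl fun d hd => ?_
  rw [← sum_smul, ← sum_coprime_exp_two_pi_I_mul_div (Nat.pos_of_mem_divisors hd)]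
  simp only [mul_div_assoc]

theorem sum_chiDot_smul {M : Type*} [AddCommMonoid M] [Module ℂ M] (n : ℕ)
    (F : Perm (Fin n) → M) :
    ∑ g, chiDot n g • F g
      = ∑ k ∈ range n, exp (2 * (π : ℂ) * I * k / n) • F (finRotate n ^ k) := by
  simp only [chiDot, sum_smul, ite_smul, zero_smul]
  rw [sum_comm]
  simp

theorem chFrob_chiInd (n : ℕ) :
    chFrob n (chiInd n) = (n : ℂ)⁻¹ • ∑ g, chiDot n g • pOf g := by
  have hfact : (n.factorial : ℂ) ≠ 0 := Nat.cast_ne_zero.mpr n.factorial_ne_zero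
  simp only [chFrob, chiInd, mul_smul, ← smul_sum]
  rw [sum_sum_conj_smul_eq_card_smul _ fun x g => pOf_conj x g, Fintype.card_perm, Fintype.card_fin,
    ← Nat.cast_smul_eq_nsmul ℂ, smul_comm _ (n.factorial : ℂ), inv_smul_smul₀ hfact]

/-- `ch(Ind_{Cₙ}^{Sₙ} χₙ) = (1/n) Σ_{d ∣ n} μ(d) p_d^{n/d}`. -/
theorem chFrob_ind_cyclic (n : ℕ) (hn : 1 ≤ n) :
    chFrob n (chiInd n) =
      ((n : ℂ))⁻¹ • ∑ d ∈ n.divisors,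
        (((ArithmeticFunction.moebius d : ℤ) : ℂ)) • pC d ^ (n / d) := by
  have : NeZero n := ⟨by omega⟩
  rw [chFrob_chiInd, sum_chiDot_smul]
  simp only [pOf_finRotate_pow]
  rw [sum_range_exp_smul_eq_sum_divisors_moebius_smul hn fun d => pC d ^ (n / d)]
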